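/- arXiv:1802.02806 — 4 statements merged into one kernel-verified Lean document; each statement's English description precedes it below -/
import Mathlib

section
/- If every Fourier coefficient matrix is skew-symmetric, i.e. Aˡ(p)ᵀ = −Aˡ(p), X(n)ᵀ = −X(n) and Y(m)ᵀ = −Y(m) for all l, p, n, m, then c(A; X, Y) = 0. -/
open Matrix

/-- Fourier modes on the torus `T³`. -/
abbrev Z3 : Type := Fin 3 → ℤ

/-- `N × N` complex matrices. -/
abbrev Mat (N : ℕ) : Type := Matrix (Fin N) (Fin N) ℂ

/-- A current: the (finitely supported) Fourier coefficients of a matrix-valued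
function on `T³`. -/
abbrev Current (N : ℕ) : Type := Z3 → Mat N

/-- A potential: the (finitely supported) Fourier coefficients of a matrix-valued
1-form on `T³`, with components `A p l`. -/
abbrev Potential (N : ℕ) : Type := Z3 → (Fin 3 → Mat N)

/-- The Levi-Civita symbol on `Fin 3`, with `eps 0 1 2 = 1`. -/
def eps (l j k : Fin 3) : ℤ :=
  (((j : ℤ) - (l : ℤ)) * ((k : ℤ) - (l : ℤ)) * ((k : ℤ) - (j : ℤ))) / 2

/-- The Mickelsson–Faddeev cocycle in Fourier components:
`c(A; X, Y) = ∑_{n,m} ∑_{l,j,k} ε_{ljk} n_j m_k tr (Aˡ(-n-m) (X(n)Y(m) + Y(m)X(n)))`. -/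
noncomputable def MF {N : ℕ} (A : Potential N) (X Y : Current N) : ℂ :=
  ∑ᶠ (n : Z3) (m : Z3), ∑ l : Fin 3, ∑ j : Fin 3, ∑ k : Fin 3,
    (eps l j k : ℂ) * ((n j : ℤ) : ℂ) * ((m k : ℤ) : ℂ) *
      (A (-n - m) l * (X n * Y m + Y m * X n)).trace

/-- The Lie bracket of currents: `[X,Y](p) = ∑_{n+m=p} (X(n)Y(m) − Y(n)X(m))`. -/
noncomputable def curBracket {N : ℕ} (X Y : Current N) : Current N :=
  fun p => ∑ᶠ n : Z3, (X n * Y (p - n) - Y n * X (p - n))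

/-- The differential of a current: `(dZ)ˡ(p) = i pₗ Z(p)`. -/
noncomputable def dCur {N : ℕ} (Z : Current N) : Potential N :=
  fun p l => (Complex.I * ((p l : ℤ) : ℂ)) • Z p

/-- The bracket of a potential with a current:
`[A,X]ˡ(p) = ∑_{n+m=p} (Aˡ(n)X(m) − X(m)Aˡ(n))`. -/
noncomputable def potBracket {N : ℕ} (A : Potential N) (X : Current N) : Potential N :=
  fun p l => ∑ᶠ n : Z3, (A n l * X (p - n) - X (p - n) * A n l)

/-- Infinitesimal gauge transformation of a potential: `ℒ_X A = [A,X] + dX`. -/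
noncomputable def gaugeL {N : ℕ} (X : Current N) (A : Potential N) : Potential N :=
  fun p l => potBracket A X p l + dCur X p l

lemma trace_skew_zero {N : ℕ} (a x y : Mat N)
    (ha : aᵀ = -a) (hx : xᵀ = -x) (hy : yᵀ = -y) :
    (a * (x * y + y * x)).trace = 0 := by
  have h : (a * (x * y + y * x)).trace = -(a * (x * y + y * x)).trace := by
    conv_lhs => rw [← Matrix.trace_transpose]
    rw [Matrix.transpose_mul, Matrix.transpose_add, Matrix.transpose_mul,
      Matrix.transpose_mul, ha, hx, hy]
    rw [show (-y * -x + -x * -y) * -a = -((y * x + x * y) * a) by noncomm_ring]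
    rw [Matrix.trace_neg, Matrix.trace_mul_comm]
    ring_nf
    rw [add_comm (x * y) (y * x)]
  linear_combination h / 2

/-- Remark, Section 2, in Fourier components: if all Fourier coefficient matrices of
the potential `A` and the currents `X`, `Y` are skew-symmetric, then the
Mickelsson–Faddeev cocycle `c(A; X, Y)` vanishes. -/
theorem MF_vanishes_of_skew {N : ℕ}
    (A : Potential N) (X Y : Current N)
    (hA : Function.support A |>.Finite)
    (hX : Function.support X |>.Finite)
    (hY : Function.support Y |>.Finite)
    (hAskew : ∀ (l : Fin 3) (p : Z3), (A p l)ᵀ = -(A p l))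
    (hXskew : ∀ n : Z3, (X n)ᵀ = -(X n))
    (hYskew : ∀ m : Z3, (Y m)ᵀ = -(Y m)) :
    MF A X Y = 0 := by
  unfold MF
  apply finsum_eq_zero_of_forall_eq_zero
  intro n
  apply finsum_eq_zero_of_forall_eq_zero
  intro m
  apply Finset.sum_eq_zero; intro l _
  apply Finset.sum_eq_zero; intro j _
  apply Finset.sum_eq_zero; intro k _
  rw [trace_skew_zero _ _ _ (hAskew l (-n - m)) (hXskew n) (hYskew m), mul_zero]
end

section
/- For all currents Z, X, Y one has c(dZ; X, Y) = 0; consequently the Lie derivative of the cocycle along Z reduces to the commutator term: c(ℒ_Z A; X, Y) = c([A,Z]; X, Y) for every potential A. -/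
open Matrix

lemma eps_key {N : ℕ} (n m : Z3) (W S : Mat N) :
    ∑ l : Fin 3, ∑ j : Fin 3, ∑ k : Fin 3,
      (eps l j k : ℂ) * ((n j : ℤ) : ℂ) * ((m k : ℤ) : ℂ) *
        ((Complex.I * (((-n - m) l : ℤ) : ℂ)) • W * S).trace = 0 := by
  simp only [Fin.sum_univ_three, Matrix.smul_mul, Matrix.trace_smul, smul_eq_mul]
  have h : ∀ l : Fin 3, (((-n - m) l : ℤ) : ℂ) = -((n l : ℤ) : ℂ) - ((m l : ℤ) : ℂ) := by
    intro l; push_cast [Pi.neg_apply, Pi.sub_apply]; ring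
  rw [h 0, h 1, h 2]
  norm_num [eps]
  ring

/-- Section 3: `c(dZ; X, Y) = 0` for all currents `Z, X, Y`; consequently the Lie
derivative of the cocycle along `Z` reduces to the commutator term:
`c(ℒ_Z A; X, Y) = c([A,Z]; X, Y)`. -/
theorem MF_dCur_vanishes_and_gaugeL_reduces {N : ℕ}
    (A : Potential N) (Z X Y : Current N)
    (hA : Function.support A |>.Finite)
    (hZ : Function.support Z |>.Finite)
    (hX : Function.support X |>.Finite)
    (hY : Function.support Y |>.Finite) :
    MF (dCur Z) X Y = 0 ∧ MF (gaugeL Z A) X Y = MF (potBracket A Z) X Y := by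
  have h1 : MF (dCur Z) X Y = 0 := by
    unfold MF
    have : ∀ n m : Z3, ∑ l : Fin 3, ∑ j : Fin 3, ∑ k : Fin 3,
        (eps l j k : ℂ) * ((n j : ℤ) : ℂ) * ((m k : ℤ) : ℂ) *
          (dCur Z (-n - m) l * (X n * Y m + Y m * X n)).trace = 0 := by
      intro n m
      simpa [dCur] using eps_key n m (Z (-n - m)) (X n * Y m + Y m * X n)
    calc (∑ᶠ (n : Z3) (m : Z3), ∑ l : Fin 3, ∑ j : Fin 3, ∑ k : Fin 3,
        (eps l j k : ℂ) * ((n j : ℤ) : ℂ) * ((m k : ℤ) : ℂ) *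
          (dCur Z (-n - m) l * (X n * Y m + Y m * X n)).trace)
        = ∑ᶠ (_ : Z3) (_ : Z3), (0 : ℂ) := by
          apply finsum_congr; intro n; apply finsum_congr; intro m; exact this n m
      _ = 0 := by simp
  refine ⟨h1, ?_⟩
  unfold MF
  apply finsum_congr; intro n; apply finsum_congr; intro m
  have hz : ∑ l : Fin 3, ∑ j : Fin 3, ∑ k : Fin 3,
      (eps l j k : ℂ) * ((n j : ℤ) : ℂ) * ((m k : ℤ) : ℂ) *
        (dCur Z (-n - m) l * (X n * Y m + Y m * X n)).trace = 0 := by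
    simpa [dCur] using eps_key n m (Z (-n - m)) (X n * Y m + Y m * X n)
  have hsplit : ∀ l : Fin 3,
      gaugeL Z A (-n - m) l * (X n * Y m + Y m * X n)
        = potBracket A Z (-n - m) l * (X n * Y m + Y m * X n)
          + dCur Z (-n - m) l * (X n * Y m + Y m * X n) := by
    intro l; simp [gaugeL, add_mul]
  simp only [mul_add, Matrix.trace_add, Finset.sum_add_distrib] at hz
  simp only [hsplit, mul_add, Matrix.trace_add, Finset.sum_add_distrib]
  linear_combination hz
end

section
/- The Mickelsson–Faddeev cocycle satisfies the 2-cocycle identity: for every potential A and all currents X, Y, Z, c(A; X, [Y,Z]) + c(A; Y, [Z,X]) + c(A; Z, [X,Y]) + c(ℒ_X A; Y, Z) + c(ℒ_Y A; Z, X) + c(ℒ_Z A; X, Y) = 0. -/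
open Matrix
open Finset Pointwise

noncomputable def brId {N : ℕ} (A : Potential N) (P Q R : Current N) (a b c : Z3) : ℂ :=
  ∑ l : Fin 3, ∑ j : Fin 3, ∑ k : Fin 3,
    (eps l j k : ℂ) * ((a j : ℤ) : ℂ) * (((b + c) k : ℤ) : ℂ) *
      (A (-(a + b + c)) l * (P a * (Q b * R c - R c * Q b) + (Q b * R c - R c * Q b) * P a)).trace

noncomputable def gaId {N : ℕ} (A : Potential N) (P Q R : Current N) (a b c : Z3) : ℂ :=
  ∑ l : Fin 3, ∑ j : Fin 3, ∑ k : Fin 3,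
    (eps l j k : ℂ) * ((b j : ℤ) : ℂ) * ((c k : ℤ) : ℂ) *
      ((A (-(a + b + c)) l * P a - P a * A (-(a + b + c)) l) * (Q b * R c + R c * Q b)).trace

lemma key0 (n m : Z3) (T : ℂ) :
    ∑ l : Fin 3, ∑ j : Fin 3, ∑ k : Fin 3,
      (eps l j k : ℂ) * ((n j : ℤ) : ℂ) * ((m k : ℤ) : ℂ) *
        ((Complex.I * (((-n - m) l : ℤ) : ℂ)) * T) = 0 := by
  simp only [Fin.sum_univ_three, Pi.sub_apply, Pi.neg_apply]
  norm_num [eps]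
  ring

lemma sum_shift {U V : Finset Z3} (hUV : ∀ a ∈ U, ∀ b ∈ U, a + b ∈ V)
    (h : Z3 → ℂ) (hh : Function.support h ⊆ ↑U) {b : Z3} (hb : b ∈ U) :
    ∑ m ∈ V, h (m - b) = ∑ c ∈ U, h c := by
  rw [← finsum_eq_sum_of_support_subset h hh,
      ← finsum_eq_sum_of_support_subset (fun m => h (m - b))
        (by intro m hm
            have hmb := hh hm
            have := hUV b hb (m - b) hmb
            simpa [add_sub_cancel] using this)]
  exact finsum_comp_equiv (Equiv.subRight b)

lemma sum_reflect {U : Finset Z3} (f : Z3 → ℂ) (w : Z3)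
    (hf : Function.support f ⊆ ↑U) (hf' : Function.support (fun x => f (w - x)) ⊆ ↑U) :
    ∑ q ∈ U, f q = ∑ x ∈ U, f (w - x) := by
  rw [← finsum_eq_sum_of_support_subset f hf,
      ← finsum_eq_sum_of_support_subset _ hf']
  exact (finsum_comp_equiv (Equiv.subLeft w)).symm

lemma sum_rot (s : Finset Z3) (f : Z3 → Z3 → Z3 → ℂ) :
    ∑ a ∈ s, ∑ b ∈ s, ∑ c ∈ s, f a b c = ∑ c ∈ s, ∑ a ∈ s, ∑ b ∈ s, f a b c := by
  calc ∑ a ∈ s, ∑ b ∈ s, ∑ c ∈ s, f a b c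
      = ∑ a ∈ s, ∑ c ∈ s, ∑ b ∈ s, f a b c := Finset.sum_congr rfl fun a _ => Finset.sum_comm
    _ = ∑ c ∈ s, ∑ a ∈ s, ∑ b ∈ s, f a b c := Finset.sum_comm

lemma sum_swap_fin3 (U : Finset Z3) (g : Fin 3 → Fin 3 → Fin 3 → Z3 → ℂ) :
    ∑ l : Fin 3, ∑ j : Fin 3, ∑ k : Fin 3, ∑ r ∈ U, g l j k r
      = ∑ r ∈ U, ∑ l : Fin 3, ∑ j : Fin 3, ∑ k : Fin 3, g l j k r := by
  calc ∑ l : Fin 3, ∑ j : Fin 3, ∑ k : Fin 3, ∑ r ∈ U, g l j k r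
      = ∑ l : Fin 3, ∑ j : Fin 3, ∑ r ∈ U, ∑ k : Fin 3, g l j k r :=
        Finset.sum_congr rfl fun l _ => Finset.sum_congr rfl fun j _ => Finset.sum_comm
    _ = ∑ l : Fin 3, ∑ r ∈ U, ∑ j : Fin 3, ∑ k : Fin 3, g l j k r :=
        Finset.sum_congr rfl fun l _ => Finset.sum_comm
    _ = ∑ r ∈ U, ∑ l : Fin 3, ∑ j : Fin 3, ∑ k : Fin 3, g l j k r := Finset.sum_comm

lemma MF_eq_sum {N : ℕ} (A : Potential N) (X' Y' : Current N) {s t : Finset Z3}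
    (hx : Function.support X' ⊆ ↑s) (hy : Function.support Y' ⊆ ↑t) :
    MF A X' Y' = ∑ n ∈ s, ∑ m ∈ t, ∑ l : Fin 3, ∑ j : Fin 3, ∑ k : Fin 3,
      (eps l j k : ℂ) * ((n j : ℤ) : ℂ) * ((m k : ℤ) : ℂ) *
        (A (-n - m) l * (X' n * Y' m + Y' m * X' n)).trace := by
  rw [MF]
  rw [finsum_eq_sum_of_support_subset _ (s := s) ?h1]
  case h1 =>
    intro n hn
    by_contra hns
    have hXn : X' n = 0 := by
      by_contra h; exact hns (hx h)
    simp [hXn] at hn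
  refine Finset.sum_congr rfl fun n _ => ?_
  refine finsum_eq_sum_of_support_subset _ ?_
  intro m hm
  by_contra hmt
  have hYm : Y' m = 0 := by
    by_contra h; exact hmt (hy h)
  simp [hYm] at hm

lemma curBracket_eq {N : ℕ} (Q R : Current N) {U : Finset Z3}
    (hQ : Function.support Q ⊆ ↑U) (hR : Function.support R ⊆ ↑U) (m : Z3) :
    curBracket Q R m = ∑ r ∈ U, (Q r * R (m - r) - R (m - r) * Q r) := by
  have h1 : Function.support (fun r => Q r * R (m - r)) ⊆ ↑U := by
    intro r hr; apply hQ; intro h0; apply hr; simp [h0]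
  have h2 : Function.support (fun r => R r * Q (m - r)) ⊆ ↑U := by
    intro r hr; apply hR; intro h0; apply hr; simp [h0]
  have h3 : Function.support (fun r => R (m - r) * Q r) ⊆ ↑U := by
    intro r hr; apply hQ; intro h0; apply hr; simp [h0]
  have key : curBracket Q R m
      = (∑ᶠ r, Q r * R (m - r)) - ∑ᶠ r, R r * Q (m - r) := by
    rw [curBracket, ← finsum_sub_distrib (U.finite_toSet.subset h1) (U.finite_toSet.subset h2)]
  have swap : (∑ᶠ r, R r * Q (m - r)) = ∑ᶠ r, R (m - r) * Q r := by
    rw [← finsum_comp_equiv (Equiv.subLeft m) (f := fun r => R r * Q (m - r))]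
    apply finsum_congr
    intro x
    simp [sub_sub_cancel]
  rw [key, swap, ← finsum_sub_distrib (U.finite_toSet.subset h1) (U.finite_toSet.subset h3)]
  apply finsum_eq_sum_of_support_subset
  intro r hr
  by_contra hrU
  have : Q r = 0 := by by_contra h; exact hrU (hQ h)
  simp [this] at hr

lemma pull_sum {N : ℕ} (U : Finset Z3) (co : Fin 3 → Fin 3 → Fin 3 → ℂ)
    (Am : Fin 3 → Mat N) (P : Mat N) (C : Z3 → Mat N) :
    ∑ l : Fin 3, ∑ j : Fin 3, ∑ k : Fin 3,
      co l j k * (Am l * (P * (∑ r ∈ U, C r) + (∑ r ∈ U, C r) * P)).trace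
    = ∑ r ∈ U, ∑ l : Fin 3, ∑ j : Fin 3, ∑ k : Fin 3,
        co l j k * (Am l * (P * C r + C r * P)).trace := by
  rw [← sum_swap_fin3]
  refine Finset.sum_congr rfl fun l _ => Finset.sum_congr rfl fun j _ =>
    Finset.sum_congr rfl fun k _ => ?_
  rw [Finset.mul_sum, Finset.sum_mul, ← Finset.sum_add_distrib, Finset.mul_sum,
    Matrix.trace_sum, Finset.mul_sum]

lemma pull_sum_left {N : ℕ} (U : Finset Z3) (co : Fin 3 → Fin 3 → Fin 3 → ℂ)
    (D : Z3 → Fin 3 → Mat N) (M : Mat N) :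
    ∑ l : Fin 3, ∑ j : Fin 3, ∑ k : Fin 3,
      co l j k * ((∑ q ∈ U, D q l) * M).trace
    = ∑ q ∈ U, ∑ l : Fin 3, ∑ j : Fin 3, ∑ k : Fin 3,
        co l j k * (D q l * M).trace := by
  rw [← sum_swap_fin3]
  refine Finset.sum_congr rfl fun l _ => Finset.sum_congr rfl fun j _ =>
    Finset.sum_congr rfl fun k _ => ?_
  rw [Finset.sum_mul, Matrix.trace_sum, Finset.mul_sum]

lemma MF_bracket_eq {N : ℕ} (A : Potential N) (P Q R : Current N) (U : Finset Z3)
    (hP : Function.support P ⊆ ↑U) (hQ : Function.support Q ⊆ ↑U)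
    (hR : Function.support R ⊆ ↑U) :
    MF A P (curBracket Q R) = ∑ a ∈ U, ∑ b ∈ U, ∑ c ∈ U, brId A P Q R a b c := by
  have hB : Function.support (curBracket Q R) ⊆ ↑(U + U) := by
    intro m hm
    rw [Function.mem_support, curBracket_eq Q R hQ hR m] at hm
    obtain ⟨r, hrU, hr0⟩ := Finset.exists_ne_zero_of_sum_ne_zero hm
    have hQr : Q r ≠ 0 := by intro h; simp [h] at hr0
    have hRr : R (m - r) ≠ 0 := by intro h; simp [h] at hr0
    have : r + (m - r) ∈ U + U :=
      Finset.add_mem_add (Finset.mem_coe.mp (hQ hQr)) (Finset.mem_coe.mp (hR hRr))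
    have hm2 : m ∈ U + U := by simpa [add_sub_cancel] using this
    exact Finset.mem_coe.mpr hm2
  rw [MF_eq_sum A P (curBracket Q R) hP hB]
  refine Finset.sum_congr rfl fun a haU => ?_
  calc ∑ m ∈ U + U, ∑ l : Fin 3, ∑ j : Fin 3, ∑ k : Fin 3,
        (eps l j k : ℂ) * ((a j : ℤ) : ℂ) * ((m k : ℤ) : ℂ) *
          (A (-a - m) l * (P a * curBracket Q R m + curBracket Q R m * P a)).trace
      = ∑ m ∈ U + U, ∑ r ∈ U, ∑ l : Fin 3, ∑ j : Fin 3, ∑ k : Fin 3,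
        (eps l j k : ℂ) * ((a j : ℤ) : ℂ) * ((m k : ℤ) : ℂ) *
          (A (-a - m) l * (P a * (Q r * R (m - r) - R (m - r) * Q r)
            + (Q r * R (m - r) - R (m - r) * Q r) * P a)).trace := by
        refine Finset.sum_congr rfl fun m _ => ?_
        rw [curBracket_eq Q R hQ hR m]
        exact pull_sum U _ _ _ _
    _ = ∑ r ∈ U, ∑ m ∈ U + U, ∑ l : Fin 3, ∑ j : Fin 3, ∑ k : Fin 3,
        (eps l j k : ℂ) * ((a j : ℤ) : ℂ) * ((m k : ℤ) : ℂ) *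
          (A (-a - m) l * (P a * (Q r * R (m - r) - R (m - r) * Q r)
            + (Q r * R (m - r) - R (m - r) * Q r) * P a)).trace := Finset.sum_comm
    _ = ∑ b ∈ U, ∑ c ∈ U, brId A P Q R a b c := by
        refine Finset.sum_congr rfl fun r hrU => ?_
        have hJ : ∀ m : Z3, (∑ l : Fin 3, ∑ j : Fin 3, ∑ k : Fin 3,
            (eps l j k : ℂ) * ((a j : ℤ) : ℂ) * ((m k : ℤ) : ℂ) *
              (A (-a - m) l * (P a * (Q r * R (m - r) - R (m - r) * Q r)
                + (Q r * R (m - r) - R (m - r) * Q r) * P a)).trace)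
            = brId A P Q R a r (m - r) := by
          intro m
          obtain ⟨c, rfl⟩ : ∃ c, m = r + c := ⟨m - r, by abel⟩
          have h1 : r + c - c = r := by abel
          have h2 : r + c - r = c := by abel
          have h3 : -a - (r + c) = -(a + r + c) := by abel
          rw [brId, h2, h3]
        rw [Finset.sum_congr rfl fun m _ => hJ m]
        refine sum_shift (fun x hx y hy => Finset.add_mem_add hx hy)
          (fun c => brId A P Q R a r c) ?_ hrU
        intro c hc
        by_contra hcU
        have hRc : R c = 0 := by by_contra h; exact hcU (hR h)
        simp [brId, hRc] at hc

lemma potBracket_eq {N : ℕ} (A : Potential N) (P : Current N) {U : Finset Z3}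
    (hA : Function.support A ⊆ ↑U) (p : Z3) (l : Fin 3) :
    potBracket A P p l = ∑ q ∈ U, (A q l * P (p - q) - P (p - q) * A q l) := by
  rw [potBracket]
  apply finsum_eq_sum_of_support_subset
  intro q hq
  by_contra hqU
  have : A q = 0 := by by_contra h; exact hqU (hA h)
  simp [this] at hq

lemma MF_gauge_eq {N : ℕ} (A : Potential N) (P Q R : Current N) (U : Finset Z3)
    (hA : Function.support A ⊆ ↑U) (hP : Function.support P ⊆ ↑U)
    (hQ : Function.support Q ⊆ ↑U) (hR : Function.support R ⊆ ↑U) :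
    MF (gaugeL P A) Q R = ∑ b ∈ U, ∑ c ∈ U, ∑ a ∈ U, gaId A P Q R a b c := by
  rw [MF_eq_sum (gaugeL P A) Q R hQ hR]
  refine Finset.sum_congr rfl fun b hb => Finset.sum_congr rfl fun c hc => ?_
  have split : ∑ l : Fin 3, ∑ j : Fin 3, ∑ k : Fin 3,
      (eps l j k : ℂ) * ((b j : ℤ) : ℂ) * ((c k : ℤ) : ℂ) *
        (gaugeL P A (-b - c) l * (Q b * R c + R c * Q b)).trace
      = (∑ l : Fin 3, ∑ j : Fin 3, ∑ k : Fin 3,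
          (eps l j k : ℂ) * ((b j : ℤ) : ℂ) * ((c k : ℤ) : ℂ) *
            (potBracket A P (-b - c) l * (Q b * R c + R c * Q b)).trace)
        + ∑ l : Fin 3, ∑ j : Fin 3, ∑ k : Fin 3,
          (eps l j k : ℂ) * ((b j : ℤ) : ℂ) * ((c k : ℤ) : ℂ) *
            (dCur P (-b - c) l * (Q b * R c + R c * Q b)).trace := by
    simp only [gaugeL, add_mul, Matrix.trace_add, mul_add, Finset.sum_add_distrib]
    ring
  have hDC : (∑ l : Fin 3, ∑ j : Fin 3, ∑ k : Fin 3,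
      (eps l j k : ℂ) * ((b j : ℤ) : ℂ) * ((c k : ℤ) : ℂ) *
        (dCur P (-b - c) l * (Q b * R c + R c * Q b)).trace) = 0 := by
    simp only [dCur, smul_mul_assoc, Matrix.trace_smul, smul_eq_mul]
    exact key0 b c _
  rw [split, hDC, add_zero]
  calc ∑ l : Fin 3, ∑ j : Fin 3, ∑ k : Fin 3,
        (eps l j k : ℂ) * ((b j : ℤ) : ℂ) * ((c k : ℤ) : ℂ) *
          (potBracket A P (-b - c) l * (Q b * R c + R c * Q b)).trace
      = ∑ q ∈ U, ∑ l : Fin 3, ∑ j : Fin 3, ∑ k : Fin 3,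
        (eps l j k : ℂ) * ((b j : ℤ) : ℂ) * ((c k : ℤ) : ℂ) *
          ((A q l * P (-b - c - q) - P (-b - c - q) * A q l) * (Q b * R c + R c * Q b)).trace := by
        rw [← pull_sum_left U _ (fun q l => A q l * P (-b - c - q) - P (-b - c - q) * A q l) _]
        refine Finset.sum_congr rfl fun l _ => Finset.sum_congr rfl fun j _ =>
          Finset.sum_congr rfl fun k _ => ?_
        rw [potBracket_eq A P hA (-b - c) l]
    _ = ∑ a ∈ U, gaId A P Q R a b c := by
        rw [sum_reflect _ (-b - c) ?s1 ?s2]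
        case s1 =>
          rw [Function.support_subset_iff']
          intro q hqU
          have : A q = 0 := by by_contra h; exact hqU (Finset.mem_coe.mp (hA h))
          simp [this]
        case s2 =>
          rw [Function.support_subset_iff']
          intro x hxU
          have hPx : P x = 0 := by by_contra h; exact hxU (Finset.mem_coe.mp (hP h))
          have e : -b - c - (-b - c - x) = x := by abel
          simp [e, hPx]
        refine Finset.sum_congr rfl fun a haU => ?_
        have e1 : -b - c - (-b - c - a) = a := by abel
        have e2 : -b - c - a = -(a + b + c) := by abel
        rw [gaId, e1, e2]

lemma key_alg {N : ℕ} (α β γ : ℂ) (A P Q R : Mat N) :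
    (γ - β) * (A * (P * (Q * R - R * Q) + (Q * R - R * Q) * P)).trace
    + (α - γ) * (A * (Q * (R * P - P * R) + (R * P - P * R) * Q)).trace
    + (β - α) * (A * (R * (P * Q - Q * P) + (P * Q - Q * P) * R)).trace
    + α * ((A * P - P * A) * (Q * R + R * Q)).trace
    + β * ((A * Q - Q * A) * (R * P + P * R)).trace
    + γ * ((A * R - R * A) * (P * Q + Q * P)).trace = 0 := by
  have hP : ∀ W : Mat N, (P * W).trace = (W * P).trace := fun W => trace_mul_comm P W
  have hQ : ∀ W : Mat N, (Q * W).trace = (W * Q).trace := fun W => trace_mul_comm Q W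
  have hR : ∀ W : Mat N, (R * W).trace = (W * R).trace := fun W => trace_mul_comm R W
  simp only [mul_add, add_mul, mul_sub, sub_mul, trace_add, trace_sub, mul_assoc]
  simp only [hP, hQ, hR, mul_assoc]
  ring

lemma key_pointwise {N : ℕ} (A : Potential N) (X Y Z : Current N) (x y z : Z3) :
    brId A X Y Z x y z + brId A Y Z X y z x + brId A Z X Y z x y
    + gaId A X Y Z x y z + gaId A Y Z X y z x + gaId A Z X Y z x y = 0 := by
  have e1 : -(y + z + x) = -(x + y + z) := by abel
  have e2 : -(z + x + y) = -(x + y + z) := by abel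
  simp only [brId, gaId, e1, e2]
  generalize A (-(x + y + z)) = B
  simp only [Fin.sum_univ_three, Pi.add_apply]
  push_cast
  norm_num [eps]
  linear_combination
    key_alg ((y 1 : ℂ) * (z 2 : ℂ) - (y 2 : ℂ) * (z 1 : ℂ))
      ((z 1 : ℂ) * (x 2 : ℂ) - (z 2 : ℂ) * (x 1 : ℂ))
      ((x 1 : ℂ) * (y 2 : ℂ) - (x 2 : ℂ) * (y 1 : ℂ))
      (B 0) (X x) (Y y) (Z z)
    + key_alg ((y 2 : ℂ) * (z 0 : ℂ) - (y 0 : ℂ) * (z 2 : ℂ))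
      ((z 2 : ℂ) * (x 0 : ℂ) - (z 0 : ℂ) * (x 2 : ℂ))
      ((x 2 : ℂ) * (y 0 : ℂ) - (x 0 : ℂ) * (y 2 : ℂ))
      (B 1) (X x) (Y y) (Z z)
    + key_alg ((y 0 : ℂ) * (z 1 : ℂ) - (y 1 : ℂ) * (z 0 : ℂ))
      ((z 0 : ℂ) * (x 1 : ℂ) - (z 1 : ℂ) * (x 0 : ℂ))
      ((x 0 : ℂ) * (y 1 : ℂ) - (x 1 : ℂ) * (y 0 : ℂ))
      (B 2) (X x) (Y y) (Z z)

/-- Section 2: the Mickelsson–Faddeev cocycle satisfies the 2-cocycle identity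
`c(A; X, [Y,Z]) + c(A; Y, [Z,X]) + c(A; Z, [X,Y])
 + c(ℒ_X A; Y, Z) + c(ℒ_Y A; Z, X) + c(ℒ_Z A; X, Y) = 0`. -/
theorem MF_cocycle_identity {N : ℕ}
    (A : Potential N) (X Y Z : Current N)
    (hA : Function.support A |>.Finite)
    (hX : Function.support X |>.Finite)
    (hY : Function.support Y |>.Finite)
    (hZ : Function.support Z |>.Finite) :
    MF A X (curBracket Y Z) + MF A Y (curBracket Z X) + MF A Z (curBracket X Y)
      + MF (gaugeL X A) Y Z + MF (gaugeL Y A) Z X + MF (gaugeL Z A) X Y = 0 := by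
  classical
  set U : Finset Z3 := hA.toFinset ∪ hX.toFinset ∪ hY.toFinset ∪ hZ.toFinset with hU
  have hAU : Function.support A ⊆ ↑U := by
    intro p hp
    simp only [hU, Finset.coe_union, Set.Finite.coe_toFinset, Set.mem_union]
    tauto
  have hXU : Function.support X ⊆ ↑U := by
    intro p hp
    simp only [hU, Finset.coe_union, Set.Finite.coe_toFinset, Set.mem_union]
    tauto
  have hYU : Function.support Y ⊆ ↑U := by
    intro p hp
    simp only [hU, Finset.coe_union, Set.Finite.coe_toFinset, Set.mem_union]
    tauto
  have hZU : Function.support Z ⊆ ↑U := by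
    intro p hp
    simp only [hU, Finset.coe_union, Set.Finite.coe_toFinset, Set.mem_union]
    tauto
  rw [MF_bracket_eq A X Y Z U hXU hYU hZU,
      MF_bracket_eq A Y Z X U hYU hZU hXU,
      MF_bracket_eq A Z X Y U hZU hXU hYU,
      MF_gauge_eq A X Y Z U hAU hXU hYU hZU,
      MF_gauge_eq A Y Z X U hAU hYU hZU hXU,
      MF_gauge_eq A Z X Y U hAU hZU hXU hYU]
  have h2 : (∑ a ∈ U, ∑ b ∈ U, ∑ c ∈ U, brId A Y Z X a b c)
      = ∑ p ∈ U, ∑ q ∈ U, ∑ r ∈ U, brId A Y Z X q r p := sum_rot U (brId A Y Z X)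
  have h3 : (∑ a ∈ U, ∑ b ∈ U, ∑ c ∈ U, brId A Z X Y a b c)
      = ∑ p ∈ U, ∑ q ∈ U, ∑ r ∈ U, brId A Z X Y r p q := by
    rw [sum_rot U (brId A Z X Y)]
    exact sum_rot U (fun p q r => brId A Z X Y q r p)
  have h4 : (∑ b ∈ U, ∑ c ∈ U, ∑ a ∈ U, gaId A X Y Z a b c)
      = ∑ p ∈ U, ∑ q ∈ U, ∑ r ∈ U, gaId A X Y Z p q r :=
    sum_rot U (fun p q r => gaId A X Y Z r p q)
  have h5 : (∑ b ∈ U, ∑ c ∈ U, ∑ a ∈ U, gaId A Y Z X a b c)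
      = ∑ p ∈ U, ∑ q ∈ U, ∑ r ∈ U, gaId A Y Z X q r p :=
    (sum_rot U (fun p q r => gaId A Y Z X q r p)).symm
  rw [h2, h3, h4, h5]
  simp only [← Finset.sum_add_distrib]
  refine Finset.sum_eq_zero fun p _ => ?_
  refine Finset.sum_eq_zero fun q _ => ?_
  refine Finset.sum_eq_zero fun r _ => ?_
  exact key_pointwise A X Y Z p q r
end

section
/- Fix p, q ∈ ℤ³, an N×N complex matrix T_a, and a finite family (T_b)_{b ∈ I} of N×N complex matrices. Let A be a potential such that S = ∑_{b ∈ I} T_b² commutes with every Fourier coefficient of A (i.e. Aˡ(r)·S = S·Aˡ(r) for all l and all r ∈ ℤ³). For a matrix M and mode r ∈ ℤ³, let δ_r M denote the current supported at r with value M. Then ∑_{b ∈ I} c( ℒ_{δ_p T_b} A ; δ_{−p} T_b , δ_q T_a ) = 0. -/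
open Matrix

/-- The current supported at the single mode `r` with value `M`. -/
def deltaCur {N : ℕ} (r : Z3) (M : Mat N) : Current N :=
  fun p => if p = r then M else 0


lemma MF_delta {N : ℕ} (A : Potential N) (r s : Z3) (M M' : Mat N) :
    MF A (deltaCur r M) (deltaCur s M')
      = ∑ l : Fin 3, ∑ j : Fin 3, ∑ k : Fin 3,
        (eps l j k : ℂ) * ((r j : ℤ) : ℂ) * ((s k : ℤ) : ℂ) *
          (A (-r - s) l * (M * M' + M' * M)).trace := by
  unfold MF
  rw [finsum_eq_single _ r, finsum_eq_single _ s]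
  · simp [deltaCur]
  · intro m hm
    simp [deltaCur, hm]
  · intro n hn
    simp [deltaCur, hn]

lemma gaugeL_delta {N : ℕ} (A : Potential N) (p r : Z3) (M : Mat N) (l : Fin 3) :
    gaugeL (deltaCur p M) A r l
      = (A (r - p) l * M - M * A (r - p) l)
        + (Complex.I * ((r l : ℤ) : ℂ)) • (if r = p then M else 0) := by
  unfold gaugeL potBracket dCur deltaCur
  congr 1
  rw [finsum_eq_single _ (r - p)]
  · simp [sub_sub_cancel]
  · intro n hn
    have h : r - n ≠ p := by
      intro h
      exact hn (by rw [← h]; ring)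
    simp [h]

lemma trace_sum_zero {N : ℕ} {I : Type*} [Fintype I] (B Ta : Mat N) (T : I → Mat N)
    (h : B * (∑ b : I, T b ^ 2) = (∑ b : I, T b ^ 2) * B) :
    ∑ b : I, ((B * T b - T b * B) * (T b * Ta + Ta * T b)).trace = 0 := by
  have hb : ∀ b : I, ((B * T b - T b * B) * (T b * Ta + Ta * T b)).trace
      = (B * T b ^ 2 * Ta).trace - (B * Ta * T b ^ 2).trace := by
    intro b
    simp only [sub_mul, mul_add, Matrix.trace_sub, Matrix.trace_add, pow_two, mul_assoc]
    rw [Matrix.trace_mul_comm (T b) (B * (T b * Ta)),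
        Matrix.trace_mul_comm (T b) (B * (Ta * T b))]
    simp only [mul_assoc]
    ring
  simp only [hb]
  rw [Finset.sum_sub_distrib, ← Matrix.trace_sum, ← Matrix.trace_sum,
      ← Finset.sum_mul, ← Finset.mul_sum, ← Finset.mul_sum]
  rw [h, mul_assoc, Matrix.trace_mul_comm]
  ring

/-- Section 3: the Fourier-component form of `∑_b ℒ^p_b c(A; T^{−p}_b, T^n_a) = 0`.
If the Casimir element `S = ∑_b T_b²` commutes with every Fourier coefficient of the
potential `A`, then `∑_b c(ℒ_{δ_p T_b} A; δ_{−p} T_b, δ_q T_a) = 0`. -/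
theorem MF_casimir_sum_vanishes {N : ℕ} {I : Type*} [Fintype I]
    (p q : Z3) (Ta : Mat N) (T : I → Mat N)
    (A : Potential N) (hA : Function.support A |>.Finite)
    (hCasimir : ∀ (l : Fin 3) (r : Z3),
      A r l * (∑ b : I, T b ^ 2) = (∑ b : I, T b ^ 2) * A r l) :
    ∑ b : I, MF (gaugeL (deltaCur p (T b)) A) (deltaCur (-p) (T b)) (deltaCur q Ta)
      = 0 := by
  by_cases hq : q = (0 : Z3)
  · subst hq
    simp only [MF_delta, Pi.zero_apply, Int.cast_zero, mul_zero, zero_mul,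
      Finset.sum_const_zero]
  · have hpq : p - q ≠ p := fun h => hq (sub_eq_self.mp h)
    simp only [MF_delta, neg_neg]
    have hg : ∀ (b : I) (l : Fin 3), gaugeL (deltaCur p (T b)) A (p - q) l
        = A (-q) l * T b - T b * A (-q) l := by
      intro b l
      rw [gaugeL_delta, if_neg hpq, smul_zero, add_zero,
        show p - q - p = -q from by ring]
    simp only [hg]
    rw [Finset.sum_comm]
    refine Finset.sum_eq_zero fun l _ => ?_
    rw [Finset.sum_comm]
    refine Finset.sum_eq_zero fun j _ => ?_
    rw [Finset.sum_comm]
    refine Finset.sum_eq_zero fun k _ => ?_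
    rw [← Finset.mul_sum, trace_sum_zero (A (-q) l) Ta T (hCasimir l (-q)), mul_zero]
end
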